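/- Let A = {a,b} and define f: A* → S as follows: given a word w of length n, f(w) is the permutation of {1,…,n+1} obtained by reading w left to right, where at step i (1 ≤ i ≤ n) the entry f(w)(i) is the smallest element of {1,…,n+1} not yet used if w(i) = a, and the largest element not yet used if w(i) = b, and f(w)(n+1) is the single remaining element. Then f is an order isomorphism from the poset A* under factor order to the subposet of the consecutive pattern poset consisting of all permutations that avoid the classical patterns 213 and 231. -/

import Mathlib

/-!
Each letter of `w` places the current minimum (`a`) or maximum (`b`) of the values not yet used,
so for positions `i < j` the comparison of `f(w)(i)` with `f(w)(j)` is decided by the letter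
`w(i)` alone. Hence every window of `f(w)` standardizes to `f` of the corresponding factor of `w`,
which makes `f` an order embedding. A sequence avoids 213 and 231 exactly when each entry is below
all later entries or above all of them, and for a permutation of an interval this says the first
entry is its minimum or maximum; peeling off first entries shows that these are exactly the images.
-/

/-- Standardization of a list of distinct naturals: replace each entry by its rank
(the number of entries less than or equal to it). -/
def stdize (s : List ℕ) : List ℕ := s.map (fun x => (s.filter (· ≤ x)).length)

/-- All contiguous subwords (infixes) of a list. -/
def infixes (l : List ℕ) : List (List ℕ) := l.inits.flatMap List.tails

/-- `l` is a permutation of `{1,…,d}` where `d = l.length ≥ 1`; these are the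
elements of the consecutive pattern poset. -/
def IsPermList (l : List ℕ) : Prop := l ≠ [] ∧ l.Perm (List.range' 1 l.length)

/-- Consecutive pattern containment: `σ ≤ τ` iff `σ` is the standardization of
some contiguous subsequence of `τ`. -/
def PattLE (σ τ : List ℕ) : Prop := σ ∈ (infixes τ).map stdize

instance (σ τ : List ℕ) : Decidable (PattLE σ τ) :=
  inferInstanceAs (Decidable (σ ∈ (infixes τ).map stdize))

/-- A permutation is monotone if its letters strictly increase or strictly decrease. -/
def MonotoneList (l : List ℕ) : Prop := l.Chain' (· < ·) ∨ l.Chain' (· > ·)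

/-- The interior `i(τ)`: standardization of `τ` with first and last letters removed. -/
def pattInterior (τ : List ℕ) : List ℕ := stdize τ.tail.dropLast

/-- Length of the longest proper prefix of `τ` whose standardization is also the
standardization of a suffix of `τ`. -/
def extLen (τ : List ℕ) : ℕ :=
  Nat.findGreatest (fun k => stdize (τ.take k) = stdize (τ.drop (τ.length - k))) (τ.length - 1)

/-- The exterior `x(τ)`: the longest permutation that is both a proper prefix and a
suffix of `τ`. -/
def pattExterior (τ : List ℕ) : List ℕ := stdize (τ.take (extLen τ))

/-- The closed interval `[σ,τ]` in the consecutive pattern poset, as a `Finset`. -/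
def pattInterval (σ τ : List ℕ) : Finset (List ℕ) :=
  ((infixes τ).map stdize).toFinset.filter (fun z => PattLE σ z)

/-- The open interval `(σ,τ)` in the consecutive pattern poset, as a `Finset`. -/
def openPattInterval (σ τ : List ℕ) : Finset (List ℕ) :=
  ((infixes τ).map stdize).toFinset.filter (fun z => PattLE σ z ∧ z ≠ σ ∧ z ≠ τ)

/-- `τ` covers `σ` in the consecutive pattern poset: `σ < τ` and no element lies
strictly between them. -/
def CoveredBy (σ τ : List ℕ) : Prop :=
  PattLE σ τ ∧ σ ≠ τ ∧ ¬ ∃ ρ, IsPermList ρ ∧ PattLE σ ρ ∧ PattLE ρ τ ∧ ρ ≠ σ ∧ ρ ≠ τ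

/-- `c` is a maximal chain of the interval `[σ,τ]`: it starts at `τ`, ends at `σ`,
and each element covers the next. -/
def IsMaxChainPatt (σ τ : List ℕ) (c : List (List ℕ)) : Prop :=
  c.head? = some τ ∧ c.getLast? = some σ ∧ c.Chain' (fun a b => CoveredBy b a)

/-- Classical pattern containment: `π` occurs as the standardization of some (not
necessarily consecutive) subsequence of `σ`. -/
def ClassLE (π σ : List ℕ) : Prop := π ∈ σ.sublists.map stdize

/-- `σ` avoids the classical patterns 213 and 231. -/
def AvoidsBoth (σ : List ℕ) : Prop := ¬ ClassLE [2,1,3] σ ∧ ¬ ClassLE [2,3,1] σ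

/-- Auxiliary construction: read the word left to right, at each letter taking the
smallest remaining value (`false`, i.e. `a`) or the largest remaining value
(`true`, i.e. `b`) from the interval `{lo,…,hi}` of unused values; the single
remaining value is appended at the end. -/
def wordToPermAux : List Bool → ℕ → ℕ → List ℕ
  | [], lo, _ => [lo]
  | (x :: rest), lo, hi =>
      if x then hi :: wordToPermAux rest lo (hi - 1)
      else lo :: wordToPermAux rest (lo + 1) hi

/-- The map `f` from words over `{a,b}` (here `a = false`, `b = true`) to
permutations: a word of length `n` is sent to a permutation of `{1,…,n+1}`. -/
def wordToPerm (w : List Bool) : List ℕ := wordToPermAux w 1 (w.length + 1)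


theorem stdize_length (s : List ℕ) : (stdize s).length = s.length := List.length_map _

theorem length_filter_le_congr {α β : Type*} [LE α] [LE β] [DecidableLE α] [DecidableLE β]
    {s : List α} {t : List β} {a : α} {b : β} (hl : s.length = t.length)
    (h : ∀ k (hk : k < s.length), s[k] ≤ a ↔ t[k] ≤ b) :
    (s.filter (· ≤ a)).length = (t.filter (· ≤ b)).length := by
  induction s generalizing t with
  | nil => rw [List.length_eq_zero_iff.mp hl.symm]; rfl
  | cons x s ih =>
    obtain _ | ⟨y, t⟩ := t
    · simp at hl
    · have hxy : x ≤ a ↔ y ≤ b := h 0 (by simp)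
      have hst := ih (by simpa using hl) fun k hk => h (k + 1) (by simpa using hk)
      simp only [List.filter_cons, hxy]
      split_ifs <;> simp [hst]

theorem stdize_eq_of_lt_iff {s t : List ℕ} (hl : s.length = t.length)
    (h : ∀ i j (hi : i < s.length) (hj : j < s.length), s[i] < s[j] ↔ t[i] < t[j]) :
    stdize s = stdize t := by
  refine List.ext_getElem (by simp [stdize_length, hl]) fun n hn _ => ?_
  rw [stdize_length] at hn
  simp only [stdize, List.getElem_map]
  exact length_filter_le_congr hl fun k hk => by
    simp only [← not_lt]
    exact not_congr (h n k hn hk)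

theorem length_filter_range'_le {n v : ℕ} (hv : v ≤ n) :
    ((List.range' 1 n).filter (· ≤ v)).length = v := by
  induction n with
  | zero => simp_all
  | succ n ih =>
    rw [List.range'_concat, List.filter_append]
    rcases Nat.lt_or_eq_of_le hv with hv | rfl
    · simp [ih (by omega)]
      omega
    · rw [List.filter_eq_self.mpr fun x hx => by simp [List.mem_range'_1] at hx ⊢; omega]
      simp [Nat.add_comm]

theorem stdize_eq_self {t : List ℕ} (ht : t.Perm (List.range' 1 t.length)) : stdize t = t := by
  refine List.ext_getElem (stdize_length t) fun n _ hn => ?_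
  have hbound := List.mem_range'_1.mp (ht.subset (List.getElem_mem hn))
  simp only [stdize, List.getElem_map]
  rw [(ht.filter _).length_eq, length_filter_range'_le (by omega)]

theorem wordToPermAux_length (w : List Bool) (lo hi : ℕ) :
    (wordToPermAux w lo hi).length = w.length + 1 := by
  induction w generalizing lo hi with
  | nil => rfl
  | cons x w ih => cases x <;> simp [wordToPermAux, ih]

theorem wordToPermAux_false_cons (w : List Bool) (lo : ℕ) :
    wordToPermAux (false :: w) lo (lo + (false :: w).length) =
      lo :: wordToPermAux w (lo + 1) (lo + 1 + w.length) := by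
  simp [wordToPermAux, Nat.add_assoc, Nat.add_comm 1]

theorem wordToPermAux_true_cons (w : List Bool) (lo : ℕ) :
    wordToPermAux (true :: w) lo (lo + (true :: w).length) =
      (lo + w.length + 1) :: wordToPermAux w lo (lo + w.length) := by
  simp [wordToPermAux, Nat.add_assoc]

theorem wordToPermAux_perm (w : List Bool) (lo : ℕ) :
    (wordToPermAux w lo (lo + w.length)).Perm (List.range' lo (w.length + 1)) := by
  induction w generalizing lo with
  | nil => simp [wordToPermAux]
  | cons x w ih =>
    cases x
    · rw [wordToPermAux_false_cons, List.length_cons, List.range'_succ]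
      exact (ih (lo + 1)).cons lo
    · rw [wordToPermAux_true_cons, List.length_cons, List.range'_concat]
      refine ((ih lo).cons _).trans ?_
      simpa [Nat.add_assoc] using (List.perm_append_singleton _ _).symm

theorem mem_wordToPermAux {w : List Bool} {lo y : ℕ}
    (hy : y ∈ wordToPermAux w lo (lo + w.length)) : lo ≤ y ∧ y ≤ lo + w.length := by
  have := List.mem_range'_1.mp ((wordToPermAux_perm w lo).subset hy)
  omega

theorem getElem_wordToPermAux_lt_iff (w : List Bool) (lo : ℕ) {i j : ℕ} (hij : i < j)
    (hj : j ≤ w.length) :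
    (wordToPermAux w lo (lo + w.length))[i]'(by rw [wordToPermAux_length]; omega) <
        (wordToPermAux w lo (lo + w.length))[j]'(by rw [wordToPermAux_length]; omega) ↔
      w[i] = false := by
  induction w generalizing lo i j with
  | nil => simp at hj; omega
  | cons x w ih =>
    obtain ⟨j, rfl⟩ : ∃ j', j = j' + 1 := ⟨j - 1, by omega⟩
    simp only [List.length_cons] at hj
    cases x
    · simp only [wordToPermAux_false_cons]
      cases i with
      | zero =>
        have hj' : j < (wordToPermAux w (lo + 1) (lo + 1 + w.length)).length := by
          rw [wordToPermAux_length]; omega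
        have := mem_wordToPermAux (List.getElem_mem hj')
        simp only [List.getElem_cons_zero, List.getElem_cons_succ, iff_true]
        omega
      | succ i => exact ih (lo + 1) (by omega) (by omega)
    · simp only [wordToPermAux_true_cons]
      cases i with
      | zero =>
        have hj' : j < (wordToPermAux w lo (lo + w.length)).length := by
          rw [wordToPermAux_length]; omega
        have := mem_wordToPermAux (List.getElem_mem hj')
        simp only [List.getElem_cons_zero, List.getElem_cons_succ, Bool.true_eq_false, iff_false]
        omega
      | succ i => exact ih lo (by omega) (by omega)

theorem wordToPerm_eq_wordToPermAux (w : List Bool) :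
    wordToPerm w = wordToPermAux w 1 (1 + w.length) := by
  rw [wordToPerm, Nat.add_comm]

theorem wordToPerm_length (w : List Bool) : (wordToPerm w).length = w.length + 1 :=
  wordToPermAux_length w _ _

theorem wordToPerm_perm (w : List Bool) :
    (wordToPerm w).Perm (List.range' 1 (wordToPerm w).length) := by
  rw [wordToPerm_length, wordToPerm_eq_wordToPermAux]
  exact wordToPermAux_perm w 1

theorem wordToPerm_nodup (w : List Bool) : (wordToPerm w).Nodup :=
  (wordToPerm_perm w).nodup_iff.mpr List.nodup_range'

theorem isPermList_wordToPerm (w : List Bool) : IsPermList (wordToPerm w) :=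
  ⟨List.ne_nil_of_length_eq_add_one (wordToPerm_length w), wordToPerm_perm w⟩

theorem getElem_wordToPerm_lt_iff (w : List Bool) {i j : ℕ} (hij : i < j) (hj : j ≤ w.length) :
    (wordToPerm w)[i]'(by rw [wordToPerm_length]; omega) <
        (wordToPerm w)[j]'(by rw [wordToPerm_length]; omega) ↔ w[i] = false := by
  simpa only [wordToPerm_eq_wordToPermAux] using getElem_wordToPermAux_lt_iff w 1 hij hj

theorem getElem_wordToPerm_gt_iff (w : List Bool) {i j : ℕ} (hij : i < j) (hj : j ≤ w.length) :
    (wordToPerm w)[j]'(by rw [wordToPerm_length]; omega) <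
        (wordToPerm w)[i]'(by rw [wordToPerm_length]; omega) ↔ w[i] = true := by
  have hne : (wordToPerm w)[j]'(by rw [wordToPerm_length]; omega) ≠
      (wordToPerm w)[i]'(by rw [wordToPerm_length]; omega) :=
    (wordToPerm_nodup w).getElem_inj_iff.not.mpr (Nat.ne_of_gt hij)
  rw [← Bool.not_eq_false, ← getElem_wordToPerm_lt_iff w hij hj]
  omega

theorem wordToPerm_injective : Function.Injective wordToPerm := by
  intro u w huw
  have hl : u.length = w.length := by simpa [wordToPerm_length] using congrArg List.length huw
  refine List.ext_getElem hl fun n hu hw => ?_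
  have hu' := getElem_wordToPerm_lt_iff u (Nat.lt_succ_self n) hu
  have hw' := getElem_wordToPerm_lt_iff w (Nat.lt_succ_self n) hw
  simp only [huw, hw'] at hu'
  cases hun : u[n] <;> cases hwn : w[n] <;> simp_all

theorem stdize_window_wordToPerm (w : List Bool) {p m : ℕ} (hpm : p + m ≤ w.length) :
    stdize (((wordToPerm w).drop p).take (m + 1)) = wordToPerm ((w.drop p).take m) := by
  set u := (w.drop p).take m
  have hu : u.length = m := by simp [u]; omega
  rw [← stdize_eq_self (wordToPerm_perm u)]
  refine stdize_eq_of_lt_iff (by simp [wordToPerm_length, hu]; omega) fun i j hi hj => ?_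
  have hm : m + 1 ≤ (wordToPerm w).length - p := by rw [wordToPerm_length]; omega
  simp only [List.length_take, List.length_drop, Nat.min_eq_left hm] at hi hj
  simp only [List.getElem_take, List.getElem_drop]
  rcases Nat.lt_trichotomy i j with hij | rfl | hij
  · rw [getElem_wordToPerm_lt_iff w (by omega : p + i < p + j) (by omega),
      getElem_wordToPerm_lt_iff u hij (by omega)]
    simp [u]
  · simp
  · rw [getElem_wordToPerm_gt_iff w (by omega : p + j < p + i) (by omega),
      getElem_wordToPerm_gt_iff u hij (by omega)]
    simp [u]

theorem List.infix_iff_exists_take_drop {α : Type*} {l₁ l₂ : List α} :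
    l₁ <:+: l₂ ↔ ∃ p m, p + m ≤ l₂.length ∧ l₁ = (l₂.drop p).take m := by
  constructor
  · rintro ⟨s, t, rfl⟩
    exact ⟨s.length, l₁.length, by simp, by simp⟩
  · rintro ⟨p, m, -, rfl⟩
    exact (List.take_prefix _ _).isInfix.trans (List.drop_suffix _ _).isInfix

theorem pattLE_iff {σ τ : List ℕ} : PattLE σ τ ↔ ∃ z, z <:+: τ ∧ stdize z = σ := by
  simp only [PattLE, infixes, List.mem_map, List.mem_flatMap, List.mem_inits, List.mem_tails]
  constructor
  · rintro ⟨z, ⟨s, hs, hz⟩, rfl⟩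
    exact ⟨z, hz.isInfix.trans hs.isInfix, rfl⟩
  · rintro ⟨z, ⟨a, b, rfl⟩, rfl⟩
    exact ⟨z, ⟨a ++ z, ⟨b, rfl⟩, ⟨a, rfl⟩⟩, rfl⟩

theorem infix_iff_pattLE_wordToPerm (u w : List Bool) :
    u <:+: w ↔ PattLE (wordToPerm u) (wordToPerm w) := by
  rw [pattLE_iff]
  constructor
  · intro huw
    obtain ⟨p, m, hpm, rfl⟩ := List.infix_iff_exists_take_drop.mp huw
    refine ⟨((wordToPerm w).drop p).take (m + 1), List.infix_iff_exists_take_drop.mpr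
      ⟨p, m + 1, by rw [wordToPerm_length]; omega, rfl⟩, stdize_window_wordToPerm w hpm⟩
  · rintro ⟨z, hz, hzu⟩
    obtain ⟨p, m, hpm, rfl⟩ := List.infix_iff_exists_take_drop.mp hz
    rw [wordToPerm_length] at hpm
    have hm : m = u.length + 1 := by
      have := congrArg List.length hzu
      simp only [stdize_length, List.length_take, List.length_drop, wordToPerm_length] at this
      omega
    subst hm
    rw [stdize_window_wordToPerm w (by omega)] at hzu
    rw [← wordToPerm_injective hzu]
    exact List.infix_iff_exists_take_drop.mpr ⟨p, u.length, by omega, rfl⟩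

theorem List.pair_sublist_or_of_mem {α : Type*} {l : List α} {a b : α} (ha : a ∈ l)
    (hb : b ∈ l) (hab : a ≠ b) : [a, b].Sublist l ∨ [b, a].Sublist l :=
  let R : α → α → Prop := fun x y => [x, y].Sublist l ∨ [y, x].Sublist l
  haveI : Std.Symm R := ⟨fun _ _ => Or.symm⟩
  (List.pairwise_iff_forall_sublist (R := R).mpr Or.inl).forall ha hb hab

theorem classLE_iff {π σ : List ℕ} :
    ClassLE π σ ↔ ∃ s, s.Sublist σ ∧ stdize s = π := by
  simp [ClassLE, List.mem_sublists]

theorem stdize_eq_213_iff {x y z : ℕ} : stdize [x, y, z] = [2, 1, 3] ↔ y < x ∧ x < z := by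
  simp only [stdize, List.map, ← List.countP_eq_length_filter, List.countP_cons,
    List.countP_nil, decide_eq_true_eq]
  split_ifs <;> simp_all <;> omega

theorem stdize_eq_231_iff {x y z : ℕ} : stdize [x, y, z] = [2, 3, 1] ↔ z < x ∧ x < y := by
  simp only [stdize, List.map, ← List.countP_eq_length_filter, List.countP_cons,
    List.countP_nil, decide_eq_true_eq]
  split_ifs <;> simp_all <;> omega

theorem AvoidsBoth.of_sublist {s t : List ℕ} (ht : AvoidsBoth t) (hst : s.Sublist t) :
    AvoidsBoth s := by
  simp only [AvoidsBoth, classLE_iff] at ht ⊢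
  exact ⟨fun ⟨r, hr, h⟩ => ht.1 ⟨r, hr.trans hst, h⟩,
    fun ⟨r, hr, h⟩ => ht.2 ⟨r, hr.trans hst, h⟩⟩

theorem classLE_cons_of_length_eq_three {π t : List ℕ} {h : ℕ} (hπ : π.length = 3)
    (hc : ClassLE π (h :: t)) :
    ClassLE π t ∨ ∃ y z, [y, z].Sublist t ∧ stdize [h, y, z] = π := by
  obtain ⟨s, hs, rfl⟩ := classLE_iff.mp hc
  rcases List.sublist_cons_iff.mp hs with hs | ⟨r, rfl, hr⟩
  · exact Or.inl (classLE_iff.mpr ⟨s, hs, rfl⟩)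
  · obtain ⟨y, z, rfl⟩ : ∃ y z, r = [y, z] := by
      rw [stdize_length, List.length_cons] at hπ
      match r, hπ with
      | [y, z], _ => exact ⟨y, z, rfl⟩
    exact Or.inr ⟨y, z, hr, rfl⟩

theorem avoidsBoth_cons_iff {h : ℕ} {t : List ℕ} :
    AvoidsBoth (h :: t) ↔ AvoidsBoth t ∧ ((∀ y ∈ t, h ≤ y) ∨ ∀ y ∈ t, y ≤ h) := by
  constructor
  · intro ha
    refine ⟨ha.of_sublist (List.sublist_cons_self h t), ?_⟩
    by_contra! ⟨⟨y, hy, hyh⟩, ⟨z, hz, hhz⟩⟩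
    rcases List.pair_sublist_or_of_mem hy hz (by omega) with hyz | hzy
    · exact ha.1 (classLE_iff.mpr ⟨_, hyz.cons_cons h, stdize_eq_213_iff.mpr ⟨hyh, hhz⟩⟩)
    · exact ha.2 (classLE_iff.mpr ⟨_, hzy.cons_cons h, stdize_eq_231_iff.mpr ⟨hyh, hhz⟩⟩)
  · rintro ⟨ht, hsep⟩
    constructor
    · intro hc
      rcases classLE_cons_of_length_eq_three rfl hc with hc | ⟨y, z, hyz, hstd⟩
      · exact ht.1 hc
      · have := stdize_eq_213_iff.mp hstd
        have := hsep.imp (· y (hyz.subset (by simp))) (· z (hyz.subset (by simp)))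
        omega
    · intro hc
      rcases classLE_cons_of_length_eq_three rfl hc with hc | ⟨y, z, hyz, hstd⟩
      · exact ht.2 hc
      · have := stdize_eq_231_iff.mp hstd
        have := hsep.imp (· z (hyz.subset (by simp))) (· y (hyz.subset (by simp)))
        omega

theorem wordToPermAux_avoidsBoth (w : List Bool) (lo : ℕ) :
    AvoidsBoth (wordToPermAux w lo (lo + w.length)) := by
  induction w generalizing lo with
  | nil => exact avoidsBoth_cons_iff.mpr ⟨by simp [AvoidsBoth, ClassLE, stdize], by simp⟩
  | cons x w ih =>
    cases x
    · rw [wordToPermAux_false_cons]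
      exact avoidsBoth_cons_iff.mpr ⟨ih _, Or.inl fun y hy => by
        have := mem_wordToPermAux hy; omega⟩
    · rw [wordToPermAux_true_cons]
      exact avoidsBoth_cons_iff.mpr ⟨ih _, Or.inr fun y hy => by
        have := mem_wordToPermAux hy; omega⟩

theorem wordToPerm_avoidsBoth (w : List Bool) : AvoidsBoth (wordToPerm w) := by
  rw [wordToPerm_eq_wordToPermAux]
  exact wordToPermAux_avoidsBoth w 1

theorem exists_wordToPermAux_eq {σ : List ℕ} (hne : σ ≠ []) (lo : ℕ)
    (hσ : σ.Perm (List.range' lo σ.length)) (ha : AvoidsBoth σ) :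
    ∃ w, wordToPermAux w lo (lo + w.length) = σ := by
  induction σ generalizing lo with
  | nil => exact absurd rfl hne
  | cons h t ih =>
    obtain rfl | ht := eq_or_ne t []
    · exact ⟨[], by simpa [wordToPermAux, eq_comm] using hσ⟩
    obtain ⟨hat, hsep⟩ := avoidsBoth_cons_iff.mp ha
    have hmem : ∀ y, y ∈ h :: t ↔ lo ≤ y ∧ y < lo + t.length + 1 := fun y => by
      rw [hσ.mem_iff, List.mem_range'_1, List.length_cons, Nat.add_assoc]
    have hh := (hmem h).mp List.mem_cons_self
    rcases hsep with hmin | hmax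
    · obtain rfl : h = lo := by
        rcases List.mem_cons.mp ((hmem lo).mpr (by omega)) with h' | h'
        · exact h'.symm
        · have := hmin lo h'; omega
      rw [List.length_cons, List.range'_succ] at hσ
      obtain ⟨w, rfl⟩ := ih ht (h + 1) hσ.cons_inv hat
      exact ⟨false :: w, wordToPermAux_false_cons w h⟩
    · obtain rfl : h = lo + t.length := by
        rcases List.mem_cons.mp ((hmem (lo + t.length)).mpr (by omega)) with h' | h'
        · exact h'.symm
        · have := hmax _ h'; omega
      rw [List.length_cons, List.range'_concat, Nat.one_mul] at hσ
      obtain ⟨w, rfl⟩ := ih ht lo (hσ.trans (List.perm_append_singleton _ _)).cons_inv hat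
      exact ⟨true :: w, by rw [wordToPermAux_true_cons, wordToPermAux_length, Nat.add_assoc]⟩

/-- `f` is an order isomorphism from `{a,b}*` under factor order onto the subposet
of the consecutive pattern poset consisting of the permutations avoiding the
classical patterns 213 and 231. -/
theorem wordToPerm_order_iso :
    (∀ w : List Bool, IsPermList (wordToPerm w) ∧ AvoidsBoth (wordToPerm w)) ∧
    Function.Injective wordToPerm ∧
    (∀ σ : List ℕ, IsPermList σ → AvoidsBoth σ → ∃ w : List Bool, wordToPerm w = σ) ∧
    (∀ u w : List Bool, u <:+: w ↔ PattLE (wordToPerm u) (wordToPerm w)) := by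
  refine ⟨fun w => ⟨isPermList_wordToPerm w, wordToPerm_avoidsBoth w⟩, wordToPerm_injective,
    ?_, infix_iff_pattLE_wordToPerm⟩
  rintro σ ⟨hne, hσ⟩ ha
  obtain ⟨w, hw⟩ := exists_wordToPermAux_eq hne 1 hσ ha
  exact ⟨w, by rwa [wordToPerm_eq_wordToPermAux]⟩
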